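/- Let {x_i}_{i=1}^m be a unit-norm frame for ℝⁿ, let P be an orthogonal projection on ℝⁿ, and let a_1,...,a_m, b_1,...,b_m be real constants. If {a_i P x_i}_{i=1}^m is a Parseval frame for the range of P and {b_i (I−P) x_i}_{i=1}^m is a Parseval frame for the range of I−P, then for every i ∈ {1,...,m}: |a_i b_i| ≤ √(a_i² + b_i²) and min(|a_i|, |b_i|) ≤ √2. -/
import Mathlib


open scoped RealInnerProductSpace
open Finset

noncomputable section

/-- `P` is an orthogonal projection: idempotent and self-adjoint. -/
def IsOrthProj {n : ℕ} (P : EuclideanSpace ℝ (Fin n) →ₗ[ℝ] EuclideanSpace ℝ (Fin n)) : Prop :=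
  P ∘ₗ P = P ∧ ∀ x y : EuclideanSpace ℝ (Fin n), ⟪P x, y⟫ = ⟪x, P y⟫

/-- A family of vectors is a Parseval frame for a subspace `Y` if
`∑ i, ⟪y, v i⟫² = ‖y‖²` for all `y ∈ Y`. -/
def IsParsevalOn {n : ℕ} {ι : Type} [Fintype ι] (Y : Submodule ℝ (EuclideanSpace ℝ (Fin n)))
    (v : ι → EuclideanSpace ℝ (Fin n)) : Prop :=
  ∀ y ∈ Y, ∑ i, ⟪y, v i⟫ ^ 2 = ‖y‖ ^ 2

theorem stmt19 {m n : ℕ} (x : Fin m → EuclideanSpace ℝ (Fin n))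
    (hframe : Submodule.span ℝ (Set.range x) = ⊤)
    (hnorm : ∀ i, ‖x i‖ = 1)
    (P : EuclideanSpace ℝ (Fin n) →ₗ[ℝ] EuclideanSpace ℝ (Fin n))
    (hP : IsOrthProj P) (a b : Fin m → ℝ)
    (ha : IsParsevalOn (LinearMap.range P) (fun i => a i • P (x i)))
    (hb : IsParsevalOn (LinearMap.range (LinearMap.id - P))
      (fun i => b i • (x i - P (x i)))) :
    ∀ i, |a i * b i| ≤ Real.sqrt (a i ^ 2 + b i ^ 2) ∧
      min |a i| |b i| ≤ Real.sqrt 2 := by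
  intro i
  set p := ‖P (x i)‖ ^ 2 with hp
  set q := ‖x i - P (x i)‖ ^ 2 with hq
  have hp0 : (0:ℝ) ≤ p := by positivity
  have hq0 : (0:ℝ) ≤ q := by positivity
  have hPP : P (P (x i)) = P (x i) := LinearMap.congr_fun hP.1 (x i)
  have horth : ⟪P (x i), x i - P (x i)⟫ = 0 := by
    rw [hP.2, map_sub, hPP, sub_self, inner_zero_right]
  have hpq : p + q = 1 := by
    have h := norm_add_sq_real (P (x i)) (x i - P (x i))
    rw [add_sub_cancel, horth, hnorm i] at h
    rw [hp, hq]; linarith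
  -- a i ^ 2 * p ≤ 1
  have key : ∀ (c : Fin m → ℝ) (v : Fin m → EuclideanSpace ℝ (Fin n)),
      (∑ j, ⟪v i, c j • v j⟫ ^ 2 = ‖v i‖ ^ 2) → c i ^ 2 * ‖v i‖ ^ 2 ≤ 1 := by
    intro c v h
    have hterm : ⟪v i, c i • v i⟫ ^ 2 ≤ ∑ j, ⟪v i, c j • v j⟫ ^ 2 :=
      Finset.single_le_sum (f := fun j => ⟪v i, c j • v j⟫ ^ 2) (fun j _ => sq_nonneg _) (Finset.mem_univ i)
    rw [h, real_inner_smul_right, real_inner_self_eq_norm_sq] at hterm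
    rcases eq_or_lt_of_le (show (0:ℝ) ≤ ‖v i‖ ^ 2 by positivity) with h0 | h0
    · rw [← h0]; simp
    · nlinarith [hterm]
  have hap : a i ^ 2 * p ≤ 1 := by
    have h := ha (P (x i)) ⟨x i, rfl⟩
    exact key a (fun j => P (x j)) h
  have hbq : b i ^ 2 * q ≤ 1 := by
    have hmem : x i - P (x i) ∈ LinearMap.range (LinearMap.id - P) := ⟨x i, rfl⟩
    have h := hb (x i - P (x i)) hmem
    exact key b (fun j => x j - P (x j)) h
  constructor
  · rw [← Real.sqrt_sq_eq_abs]
    apply Real.sqrt_le_sqrt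
    nlinarith [sq_nonneg (a i), sq_nonneg (b i), mul_nonneg (mul_nonneg (sq_nonneg (a i)) (sq_nonneg (b i))) hp0, mul_nonneg (mul_nonneg (sq_nonneg (a i)) (sq_nonneg (b i))) hq0]
  · rcases le_or_gt p (1/2) with hc | hc
    · have hq2 : (1:ℝ)/2 ≤ q := by linarith
      have : b i ^ 2 ≤ 2 := by nlinarith
      refine le_trans (min_le_right _ _) ?_
      rw [← Real.sqrt_sq_eq_abs]
      exact Real.sqrt_le_sqrt this
    · have : a i ^ 2 ≤ 2 := by nlinarith
      refine le_trans (min_le_left _ _) ?_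
      rw [← Real.sqrt_sq_eq_abs]
      exact Real.sqrt_le_sqrt this
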